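/- arXiv:2311.08386 — 6 statements merged into one kernel-verified Lean document; each statement's English description precedes it below -/
import Mathlib

section
/- N-sum box (Lemma 3): Let F be a finite field of characteristic p, let N ≥ 1, and let M = [M_l | M_r] be an N × 2N matrix over F (M_l, M_r ∈ F^{N×N}) that is strongly self-orthogonal, i.e., rank(M) = N and M_r M_lᵀ = M_l M_rᵀ. Then there exists a family of vectors (v_a)_{a ∈ F^N}, each v_a : (Fin N → F) → ℂ a vector in ℂ^{F^N}, that is orthonormal with respect to the standard Hermitian inner product (⟨v_a, v_{a'}⟩ = 1 if a = a' and 0 otherwise), such that for all a ∈ F^N and all x, z ∈ F^N there exists c ∈ ℂ with |c| = 1 satisfying W(x,z) · v_a = c • v_{a + M·(x;z)}, where (x;z) ∈ F^{2N} is the concatenation of x and z, and W(x,z) is the matrix on ℂ^{F^N} with entries W(x,z)(f,g) = ∏_{i=1}^{N} (X(x_i) * Z(z_i))(f(i), g(i)), i.e., the N-fold tensor product of the single-qudit operators X(x_i)Z(z_i). -/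
open scoped Matrix

/-- The root of unity `ω = exp(2πi/p)`. -/
noncomputable def omegaP (p : ℕ) : ℂ :=
  Complex.exp (2 * (Real.pi : ℂ) * Complex.I / (p : ℂ))

/-- The generalized shift ("X") operator on a qudit indexed by the finite field `F`:
`X(x)(a,b) = 1` if `a = b + x` and `0` otherwise. -/
noncomputable def Xmat (F : Type*) [Field F] [Fintype F] [DecidableEq F] (x : F) :
    Matrix F F ℂ :=
  Matrix.of fun a b => if a = b + x then 1 else 0

/-- The generalized clock ("Z") operator on a qudit indexed by the finite field `F`
of characteristic `p`: the diagonal matrix with entries `ω^{tr(b z)}`, where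
`tr : F → ZMod p` is the field trace and the exponent is the canonical
representative in `{0, …, p-1}`. -/
noncomputable def Zmat (F : Type*) [Field F] [Fintype F] [DecidableEq F]
    (p : ℕ) [CharP F p] [Algebra (ZMod p) F] (z : F) :
    Matrix F F ℂ :=
  Matrix.diagonal fun b => (omegaP p) ^ ((Algebra.trace (ZMod p) F) (b * z)).val

/-- The `N`-fold tensor product of single-qudit operators `X(x_i) Z(z_i)`, acting
on `ℂ^{F^N}`:  `W(x,z)(f,g) = ∏ i, (X(x_i) * Z(z_i))(f i, g i)`. -/
noncomputable def Wmat (F : Type*) [Field F] [Fintype F] [DecidableEq F]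
    (p : ℕ) [CharP F p] [Algebra (ZMod p) F] (N : ℕ) (x z : Fin N → F) :
    Matrix (Fin N → F) (Fin N → F) ℂ :=
  Matrix.of fun f g => ∏ i : Fin N, (Xmat F (x i) * Zmat F p (z i)) (f i) (g i)

/-! ### Auxiliary material -/

universe u

section EPS
variable (p : ℕ) [Fact p.Prime]

/-- `ε(t) = ω^t`. -/
noncomputable def epsP (t : ZMod p) : ℂ := omegaP p ^ t.val

lemma omegaP_pow_p : omegaP p ^ p = 1 := by
  have hp : (p : ℂ) ≠ 0 := Nat.cast_ne_zero.2 (Fact.out : p.Prime).ne_zero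
  rw [omegaP, ← Complex.exp_nat_mul,
    show (p : ℂ) * (2 * (Real.pi : ℂ) * Complex.I / (p : ℂ)) = 2 * (Real.pi : ℂ) * Complex.I by
      field_simp, Complex.exp_two_pi_mul_I]

lemma abs_omegaP : ‖omegaP p‖ = 1 := by
  rw [omegaP, Complex.norm_exp]
  norm_num [Complex.div_re, Complex.mul_re, Complex.mul_im]

lemma abs_epsP (t : ZMod p) : ‖epsP p t‖ = 1 := by
  rw [epsP, norm_pow, abs_omegaP, one_pow]

lemma epsP_ne_zero (t : ZMod p) : epsP p t ≠ 0 := by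
  intro h; have := abs_epsP p t; rw [h] at this; simp at this

lemma epsP_add (s t : ZMod p) : epsP p (s + t) = epsP p s * epsP p t := by
  have h := omegaP_pow_p p
  rw [epsP, epsP, epsP, ← pow_add, ZMod.val_add]
  conv_rhs => rw [← Nat.mod_add_div (s.val + t.val) p, pow_add, pow_mul, h, one_pow, mul_one]

lemma epsP_zero : epsP p (0 : ZMod p) = 1 := by
  rw [epsP, ZMod.val_zero, pow_zero]

lemma epsP_neg (t : ZMod p) : epsP p (-t) = (epsP p t)⁻¹ := by
  have h : epsP p (-t) * epsP p t = 1 := by rw [← epsP_add, neg_add_cancel, epsP_zero]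
  exact eq_inv_of_mul_eq_one_left h

lemma conj_epsP_mul (t : ZMod p) : (starRingEnd ℂ) (epsP p t) * epsP p t = 1 := by
  rw [mul_comm, Complex.mul_conj, Complex.normSq_eq_norm_sq, abs_epsP, one_pow, Complex.ofReal_one]

lemma epsP_ne_one (t : ZMod p) (ht : t ≠ 0) : epsP p t ≠ 1 := by
  have hppos : 0 < p := (Fact.out : p.Prime).pos
  haveI : NeZero p := ⟨hppos.ne'⟩
  rw [epsP]
  intro h
  rw [omegaP, ← Complex.exp_nat_mul, Complex.exp_eq_one_iff] at h
  obtain ⟨n, hn⟩ := h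
  obtain ⟨m, hm⟩ : ∃ m, t.val = m := ⟨_, rfl⟩
  rw [hm] at hn
  have hpc : (p : ℂ) ≠ 0 := Nat.cast_ne_zero.2 hppos.ne'
  have h2 : (2 : ℂ) * Real.pi * Complex.I ≠ 0 := by
    simp [Real.pi_ne_zero, Complex.I_ne_zero, Complex.ofReal_ne_zero]
  have hv : (m : ℂ) = n * p := by
    field_simp at hn
    linear_combination hn
  have hv2 : (m : ℤ) = n * p := by exact_mod_cast hv
  have hdvd : (p : ℕ) ∣ m := by
    have : (p : ℤ) ∣ (m : ℤ) := ⟨n, by linarith⟩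
    exact_mod_cast this
  have hlt : m < p := hm ▸ ZMod.val_lt t
  have h0 : m = 0 := Nat.eq_zero_of_dvd_of_lt hdvd hlt
  exact ht ((ZMod.val_eq_zero t).mp (hm ▸ h0))

lemma epsP_sum {ι : Type*} (s : Finset ι) (h : ι → ZMod p) :
    epsP p (∑ i ∈ s, h i) = ∏ i ∈ s, epsP p (h i) := by
  classical
  induction s using Finset.cons_induction with
  | empty => simp [epsP_zero]
  | cons a s ha ih => rw [Finset.sum_cons, Finset.prod_cons, epsP_add, ih]
end EPS

section JOINT

lemma exists_joint_eigenvector :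
    ∀ (n : ℕ) (V : Type u) (_ : AddCommGroup V) (_ : Module ℂ V),
      FiniteDimensional ℂ V → Nontrivial V →
      ∀ (s : Finset (Module.End ℂ V)), s.card ≤ n →
      (∀ f ∈ s, ∀ g ∈ s, Commute f g) →
      ∃ v : V, v ≠ 0 ∧ ∀ f ∈ s, ∃ μ : ℂ, f v = μ • v := by
  intro n
  induction n with
  | zero =>
    intro V _ _ _ _ s hcard _
    obtain ⟨v, hv⟩ := exists_ne (0 : V)
    refine ⟨v, hv, fun f hf => absurd hf ?_⟩
    rw [Finset.card_eq_zero.mp (Nat.le_zero.mp hcard)]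
    exact Finset.notMem_empty f
  | succ n ih =>
    intro V _ _ hfd hnt s hcard hcomm
    classical
    rcases s.eq_empty_or_nonempty with rfl | ⟨f, hf⟩
    · obtain ⟨v, hv⟩ := exists_ne (0 : V)
      exact ⟨v, hv, fun f hf => absurd hf (Finset.notMem_empty f)⟩
    · obtain ⟨μ, hμ⟩ := Module.End.exists_eigenvalue f
      set E := f.eigenspace μ with hE
      haveI : Nontrivial E := Submodule.nontrivial_iff_ne_bot.mpr hμ
      have hinv : ∀ g ∈ s, ∀ x ∈ E, g x ∈ E := fun g hg =>
        Module.End.mapsTo_genEigenspace_of_comm (hcomm f hf g hg) μ 1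
      set t : Finset (Module.End ℂ E) :=
        (s.erase f).attach.image
          (fun g => LinearMap.restrict g.1 (hinv g.1 (Finset.mem_of_mem_erase g.2))) with ht
      have hcard' : t.card ≤ n := by
        calc t.card ≤ (s.erase f).attach.card := Finset.card_image_le
          _ = (s.erase f).card := Finset.card_attach
          _ ≤ n := by
              have := Finset.card_erase_of_mem hf
              omega
      have hcomm' : ∀ a ∈ t, ∀ b ∈ t, Commute a b := by
        intro a ha b hb
        rw [ht, Finset.mem_image] at ha hb
        obtain ⟨g, _, rfl⟩ := ha
        obtain ⟨h, _, rfl⟩ := hb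
        exact LinearMap.restrict_commute
          (hcomm g.1 (Finset.mem_of_mem_erase g.2) h.1 (Finset.mem_of_mem_erase h.2)) _ _
      obtain ⟨w, hw0, hweig⟩ :=
        ih E inferInstance inferInstance inferInstance inferInstance t hcard' hcomm'
      refine ⟨(w : V), by simpa using hw0, ?_⟩
      intro g hg
      by_cases hgf : g = f
      · subst hgf
        exact ⟨μ, Module.End.mem_eigenspace_iff.mp w.2⟩
      · have hgs : g ∈ s.erase f := Finset.mem_erase.mpr ⟨hgf, hg⟩
        have hmem : LinearMap.restrict g (hinv g hg) ∈ t := by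
          rw [ht, Finset.mem_image]
          exact ⟨⟨g, hgs⟩, Finset.mem_attach _ _, rfl⟩
        obtain ⟨ν, hν⟩ := hweig _ hmem
        refine ⟨ν, ?_⟩
        have := congrArg (Subtype.val) hν
        simpa [LinearMap.restrict_apply] using this
end JOINT

section WOP
variable {F : Type*} [Field F] [Fintype F] [DecidableEq F]
  (p : ℕ) [Fact p.Prime] [CharP F p] [Algebra (ZMod p) F] {N : ℕ}

/-- The field trace to `ZMod p`. -/
noncomputable def trP (a : F) : ZMod p := Algebra.trace (ZMod p) F a

/-- The action of `Wmat` as an explicit operator. -/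
noncomputable def Wv (x z : Fin N → F) (v : (Fin N → F) → ℂ) : (Fin N → F) → ℂ :=
  fun f => epsP p (trP p (∑ i, (f i - x i) * z i)) * v (f - x)

lemma Wmat_mulVec (x z : Fin N → F) (v : (Fin N → F) → ℂ) :
    (Wmat F p N x z).mulVec v = Wv p x z v := by
  funext f
  rw [Matrix.mulVec, Wv]
  have hentry : ∀ g : Fin N → F, Wmat F p N x z f g =
      if g = f - x then epsP p (trP p (∑ i, (f i - x i) * z i)) else 0 := by
    intro g
    rw [Wmat, Matrix.of_apply]
    by_cases hg : g = f - x
    · subst hg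
      rw [if_pos rfl]
      have key : ∀ i, (Xmat F (x i) * Zmat F p (z i)) (f i) ((f - x) i)
          = epsP p (trP p ((f i - x i) * z i)) := by
        intro i
        rw [Xmat, Zmat, Matrix.mul_diagonal, Matrix.of_apply, Pi.sub_apply]
        rw [if_pos (by ring), one_mul, epsP, trP]
      rw [Finset.prod_congr rfl (fun i _ => key i)]
      rw [← epsP_sum]
      congr 1
      simp only [trP]
      rw [map_sum]
    · rw [if_neg hg]
      have hex : ∃ i, (f - x) i ≠ g i := by
        by_contra hc
        push_neg at hc
        exact hg (funext fun i => (hc i).symm)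
      obtain ⟨i, hi⟩ := hex
      apply Finset.prod_eq_zero (Finset.mem_univ i)
      rw [Xmat, Zmat, Matrix.mul_diagonal, Matrix.of_apply]
      rw [if_neg, zero_mul]
      intro hfi
      exact hi (by rw [Pi.sub_apply]; rw [hfi]; ring)
  calc ∑ g, Wmat F p N x z f g * v g
      = ∑ g, (if g = f - x then epsP p (trP p (∑ i, (f i - x i) * z i)) else 0) * v g := by
        refine Finset.sum_congr rfl fun g _ => by rw [hentry g]
    _ = epsP p (trP p (∑ i, (f i - x i) * z i)) * v (f - x) := by
        rw [Finset.sum_eq_single (f - x)]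
        · rw [if_pos rfl]
        · intro g _ hne; rw [if_neg hne, zero_mul]
        · intro h; exact absurd (Finset.mem_univ _) h

lemma Wv_comp (x z x' z' : Fin N → F) (v : (Fin N → F) → ℂ) :
    Wv p x z (Wv p x' z' v)
      = epsP p (trP p (x' ⬝ᵥ z)) • Wv p (x + x') (z + z') v := by
  funext f
  simp only [Wv, Pi.smul_apply, smul_eq_mul, Pi.sub_apply, Pi.add_apply]
  rw [sub_sub f x x']
  have key : trP (F := F) p (∑ i, (f i - x i) * z i) + trP (F := F) p (∑ i, (f i - x i - x' i) * z' i)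
      = trP (F := F) p (x' ⬝ᵥ z) + trP (F := F) p (∑ i, (f i - (x i + x' i)) * (z i + z' i)) := by
    simp only [trP]
    rw [← map_add, ← map_add]
    congr 1
    rw [dotProduct, ← Finset.sum_add_distrib, ← Finset.sum_add_distrib]
    exact Finset.sum_congr rfl fun i _ => by ring
  rw [← mul_assoc, ← mul_assoc, ← epsP_add, ← epsP_add, key]

lemma Wv_zero (v : (Fin N → F) → ℂ) : Wv p (0 : Fin N → F) (0 : Fin N → F) v = v := by
  funext f
  simp [Wv, epsP_zero, trP]

lemma Wv_smul (x z : Fin N → F) (c : ℂ) (v : (Fin N → F) → ℂ) :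
    Wv p x z (c • v) = c • Wv p x z v := by
  funext f
  simp only [Wv, Pi.smul_apply, smul_eq_mul]
  ring

lemma Wv_add (x z : Fin N → F) (v w : (Fin N → F) → ℂ) :
    Wv p x z (v + w) = Wv p x z v + Wv p x z w := by
  funext f
  simp only [Wv, Pi.add_apply]
  ring

lemma Wv_ip (x z : Fin N → F) (u w : (Fin N → F) → ℂ) :
    ∑ f, (starRingEnd ℂ) (Wv p x z u f) * Wv p x z w f
      = ∑ f, (starRingEnd ℂ) (u f) * w f := by
  have h1 : ∀ f : Fin N → F, (starRingEnd ℂ) (Wv p x z u f) * Wv p x z w f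
      = (starRingEnd ℂ) (u (f - x)) * w (f - x) := by
    intro f
    rw [Wv, map_mul]
    calc (starRingEnd ℂ) (epsP p (trP p (∑ i, (f i - x i) * z i))) * (starRingEnd ℂ) (u (f - x))
          * (epsP p (trP p (∑ i, (f i - x i) * z i)) * w (f - x))
        = ((starRingEnd ℂ) (epsP p (trP p (∑ i, (f i - x i) * z i)))
            * epsP p (trP p (∑ i, (f i - x i) * z i)))
          * ((starRingEnd ℂ) (u (f - x)) * w (f - x)) := by ring
      _ = (starRingEnd ℂ) (u (f - x)) * w (f - x) := by rw [conj_epsP_mul, one_mul]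
  calc ∑ f, (starRingEnd ℂ) (Wv p x z u f) * Wv p x z w f
      = ∑ f, (starRingEnd ℂ) (u (f - x)) * w (f - x) := Finset.sum_congr rfl fun f _ => h1 f
    _ = ∑ f, (starRingEnd ℂ) (u f) * w f :=
        Fintype.sum_equiv (Equiv.subRight x) _ _ (fun f => rfl)

/-- `Wv` as a linear endomorphism. -/
noncomputable def WvEnd (x z : Fin N → F) : Module.End ℂ ((Fin N → F) → ℂ) where
  toFun := Wv p x z
  map_add' := Wv_add p x z
  map_smul' := fun c v => Wv_smul p x z c v
end WOP

section DOT
variable {F : Type*} [Field F] [Fintype F] {N : ℕ}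

lemma dot_aux (A : Matrix (Fin N) (Fin N) F) (u w : Fin N → F) :
    (Aᵀ *ᵥ u) ⬝ᵥ w = u ⬝ᵥ (A *ᵥ w) := by
  rw [Matrix.mulVec_transpose, Matrix.dotProduct_mulVec]

lemma dot_symm_matrix (B : Matrix (Fin N) (Fin N) F) (hB : Bᵀ = B) (a b : Fin N → F) :
    a ⬝ᵥ (B *ᵥ b) = b ⬝ᵥ (B *ᵥ a) := by
  rw [← dot_aux B a b, hB]
  exact dotProduct_comm _ _
end DOT

section LA
variable {F : Type*} [Field F] [Fintype F] [DecidableEq F] {N : ℕ}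
variable (Ml Mr : Matrix (Fin N) (Fin N) F)

/-- The parametrization of the symplectic partner of the row space. -/
noncomputable def Lmap : (Fin N → F) →ₗ[F] ((Fin N ⊕ Fin N) → F) where
  toFun y := Sum.elim (Mrᵀ *ᵥ y) (-(Mlᵀ *ᵥ y))
  map_add' a b := by
    funext i
    cases i with
    | inl i => simp [Matrix.mulVec_add]
    | inr i => simp [Matrix.mulVec_add]; ring
  map_smul' c a := by
    funext i
    cases i with
    | inl i => simp [Matrix.mulVec_smul]
    | inr i => simp [Matrix.mulVec_smul]

lemma Lmap_apply (y : Fin N → F) :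
    Lmap Ml Mr y = Sum.elim (Mrᵀ *ᵥ y) (-(Mlᵀ *ᵥ y)) := rfl

lemma finrank_funN : Module.finrank F (Fin N → F) = N := by
  rw [Module.finrank_pi]; simp

lemma finrank_fun2N : Module.finrank F ((Fin N ⊕ Fin N) → F) = N + N := by
  rw [Module.finrank_pi]; simp

lemma surj_fromColumns (hrank : (Matrix.fromCols Ml Mr).rank = N) (a : Fin N → F) :
    ∃ u w : Fin N → F, Ml *ᵥ u + Mr *ᵥ w = a := by
  set Φ := (Matrix.fromCols Ml Mr).mulVecLin with hΦ
  have hrange : Module.finrank F (LinearMap.range Φ) = N := hrank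
  have htop : LinearMap.range Φ = ⊤ :=
    Submodule.eq_top_of_finrank_eq (by rw [hrange, finrank_funN])
  have hsurj : Function.Surjective Φ := LinearMap.range_eq_top.mp htop
  obtain ⟨s, hs⟩ := hsurj a
  refine ⟨s ∘ Sum.inl, s ∘ Sum.inr, ?_⟩
  have hss : Sum.elim (s ∘ Sum.inl) (s ∘ Sum.inr) = s := funext fun i => by cases i <;> rfl
  rw [← Matrix.fromCols_mulVec_sumElim, hss]
  exact hs

lemma ker_fromColumns (hrank : (Matrix.fromCols Ml Mr).rank = N)
    (hSSO : Mr * Ml.transpose = Ml * Mr.transpose) (u w : Fin N → F)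
    (h : Ml *ᵥ u + Mr *ᵥ w = 0) : ∃ y, u = Mrᵀ *ᵥ y ∧ w = -(Mlᵀ *ᵥ y) := by
  classical
  set Φ := (Matrix.fromCols Ml Mr).mulVecLin with hΦ
  have hrange : Module.finrank F (LinearMap.range Φ) = N := hrank
  have hLinj : LinearMap.ker (Lmap Ml Mr) = ⊥ := by
    rw [LinearMap.ker_eq_bot']
    intro y hy
    rw [Lmap_apply] at hy
    have h1 : Mrᵀ *ᵥ y = 0 := funext fun i => congrFun hy (Sum.inl i)
    have h2 : Mlᵀ *ᵥ y = 0 := by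
      funext i
      have h3 := congrFun hy (Sum.inr i)
      simp only [Sum.elim_inr, Pi.neg_apply, Pi.zero_apply, neg_eq_zero] at h3
      exact h3
    have h3 : ((Matrix.fromCols Ml Mr)ᵀ).mulVecLin y = 0 := by
      rw [Matrix.mulVecLin_apply, Matrix.transpose_fromCols, Matrix.fromRows_mulVec, h1, h2]
      funext i; cases i <;> rfl
    have hrkT : Module.finrank F (LinearMap.range ((Matrix.fromCols Ml Mr)ᵀ).mulVecLin) = N := by
      have := Matrix.rank_transpose (Matrix.fromCols Ml Mr)
      rw [hrank] at this
      exact this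
    have hsum := LinearMap.finrank_range_add_finrank_ker ((Matrix.fromCols Ml Mr)ᵀ).mulVecLin
    rw [hrkT, finrank_funN] at hsum
    have hker0 : Module.finrank F (LinearMap.ker ((Matrix.fromCols Ml Mr)ᵀ).mulVecLin) = 0 := by
      omega
    have hbot : LinearMap.ker ((Matrix.fromCols Ml Mr)ᵀ).mulVecLin = ⊥ :=
      Submodule.finrank_eq_zero.mp hker0
    have : y ∈ LinearMap.ker ((Matrix.fromCols Ml Mr)ᵀ).mulVecLin := h3
    rw [hbot] at this
    exact this
  have hrangeL : Module.finrank F (LinearMap.range (Lmap Ml Mr)) = N := by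
    have hsum := LinearMap.finrank_range_add_finrank_ker (Lmap Ml Mr)
    rw [hLinj, finrank_bot, finrank_funN] at hsum
    omega
  have hle : LinearMap.range (Lmap Ml Mr) ≤ LinearMap.ker Φ := by
    rintro _ ⟨y, rfl⟩
    rw [LinearMap.mem_ker, hΦ, Matrix.mulVecLin_apply, Lmap_apply,
      Matrix.fromCols_mulVec_sumElim, Matrix.mulVec_neg, Matrix.mulVec_mulVec,
      Matrix.mulVec_mulVec, hSSO, add_neg_cancel]
  have hkerΦ : Module.finrank F (LinearMap.ker Φ) = N := by
    have hsum := LinearMap.finrank_range_add_finrank_ker Φ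
    rw [hrange, finrank_fun2N] at hsum
    omega
  have heq : LinearMap.range (Lmap Ml Mr) = LinearMap.ker Φ :=
    Submodule.eq_of_le_of_finrank_le hle (by rw [hkerΦ, hrangeL])
  have hmem : Sum.elim u w ∈ LinearMap.ker Φ := by
    rw [LinearMap.mem_ker, hΦ, Matrix.mulVecLin_apply, Matrix.fromCols_mulVec_sumElim, h]
  rw [← heq] at hmem
  obtain ⟨y, hy⟩ := hmem
  rw [Lmap_apply] at hy
  refine ⟨y, ?_, ?_⟩
  · exact funext fun i => (congrFun hy (Sum.inl i)).symm
  · exact funext fun i => (congrFun hy (Sum.inr i)).symm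
end LA

section IP
variable {α : Type*} [Fintype α]

lemma ip_smul (c d : ℂ) (g h : α → ℂ) :
    ∑ f, (starRingEnd ℂ) ((c • g) f) * ((d • h) f)
      = (starRingEnd ℂ) c * d * ∑ f, (starRingEnd ℂ) (g f) * h f := by
  rw [Finset.mul_sum]
  refine Finset.sum_congr rfl fun f _ => ?_
  simp only [Pi.smul_apply, smul_eq_mul, map_mul]
  ring

lemma cancel_of_ne_one (s c : ℂ) (h : s = c * s) (hc : c ≠ 1) : s = 0 := by
  have h0 : (c - 1) * s = 0 := by linear_combination -h
  rcases mul_eq_zero.mp h0 with h1 | h1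
  · exact absurd (sub_eq_zero.mp h1) hc
  · exact h1
end IP

section MAIN
variable {F : Type*} [Field F] [Fintype F] [DecidableEq F]
  (p : ℕ) [Fact p.Prime] [CharP F p] [Algebra (ZMod p) F] {N : ℕ}
variable (Ml Mr : Matrix (Fin N) (Fin N) F)

lemma WvEnd_apply (x z : Fin N → F) (v : (Fin N → F) → ℂ) :
    WvEnd p x z v = Wv p x z v := rfl

lemma WvEnd_commute (hSSO : Mr * Ml.transpose = Ml * Mr.transpose) (y y' : Fin N → F) :
    Commute (WvEnd p (Mrᵀ *ᵥ y) (-(Mlᵀ *ᵥ y))) (WvEnd p (Mrᵀ *ᵥ y') (-(Mlᵀ *ᵥ y'))) := by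
  have hB : (Mr * Mlᵀ)ᵀ = Mr * Mlᵀ := by
    rw [Matrix.transpose_mul, Matrix.transpose_transpose, ← hSSO]
  have hdot : (Mrᵀ *ᵥ y') ⬝ᵥ (-(Mlᵀ *ᵥ y)) = (Mrᵀ *ᵥ y) ⬝ᵥ (-(Mlᵀ *ᵥ y')) := by
    rw [dotProduct_neg, dotProduct_neg]
    congr 1
    rw [dot_aux, dot_aux, Matrix.mulVec_mulVec, Matrix.mulVec_mulVec]
    exact dot_symm_matrix _ hB y' y
  apply LinearMap.ext
  intro v
  simp only [Module.End.mul_apply, WvEnd_apply]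
  rw [Wv_comp, Wv_comp, hdot, add_comm (Mrᵀ *ᵥ y) (Mrᵀ *ᵥ y'),
    add_comm (-(Mlᵀ *ᵥ y)) (-(Mlᵀ *ᵥ y'))]

lemma ip_Wv_zero (v₀ : (Fin N → F) → ℂ) (u w y : Fin N → F) (μ : ℂ)
    (hμ : (starRingEnd ℂ) μ * μ = 1)
    (heig : Wv p (Mrᵀ *ᵥ y) (-(Mlᵀ *ᵥ y)) v₀ = μ • v₀)
    (hδ : trP (F := F) p (u ⬝ᵥ (-(Mlᵀ *ᵥ y)) - (Mrᵀ *ᵥ y) ⬝ᵥ w) ≠ 0) :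
    ∑ f, (starRingEnd ℂ) (v₀ f) * Wv p u w v₀ f = 0 := by
  set kx := Mrᵀ *ᵥ y with hkx
  set kz := -(Mlᵀ *ᵥ y) with hkz
  have hstep : Wv p (kx + u) (kz + w) v₀
      = (epsP p (trP p (kx ⬝ᵥ w)))⁻¹ • (μ • Wv p u w v₀) := by
    rw [eq_inv_smul_iff₀ (epsP_ne_zero p _), add_comm kx u, add_comm kz w,
      ← Wv_comp p u w kx kz v₀, heig, Wv_smul]
  have hkey : (∑ f, (starRingEnd ℂ) (v₀ f) * Wv p u w v₀ f)
      = ((starRingEnd ℂ) μ * (epsP p (trP p (u ⬝ᵥ kz)) * (epsP p (trP p (kx ⬝ᵥ w)))⁻¹ * μ))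
        * ∑ f, (starRingEnd ℂ) (v₀ f) * Wv p u w v₀ f := by
    conv_lhs => rw [← Wv_ip p kx kz v₀ (Wv p u w v₀)]
    rw [Wv_comp p kx kz u w v₀, hstep, heig, smul_smul, smul_smul, ip_smul]
  have hCval : (starRingEnd ℂ) μ * (epsP p (trP p (u ⬝ᵥ kz)) * (epsP p (trP p (kx ⬝ᵥ w)))⁻¹ * μ)
      = epsP p (trP p (u ⬝ᵥ kz - kx ⬝ᵥ w)) := by
    have h1 : epsP p (trP (F := F) p (u ⬝ᵥ kz - kx ⬝ᵥ w))
        = epsP p (trP p (u ⬝ᵥ kz)) * (epsP p (trP p (kx ⬝ᵥ w)))⁻¹ := by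
      have h2 : trP (F := F) p (u ⬝ᵥ kz - kx ⬝ᵥ w)
          = trP p (u ⬝ᵥ kz) + -(trP (F := F) p (kx ⬝ᵥ w)) := by
        simp [trP, map_sub, sub_eq_add_neg]
      rw [h2, epsP_add, epsP_neg]
    rw [h1]
    calc (starRingEnd ℂ) μ * (epsP p (trP p (u ⬝ᵥ kz)) * (epsP p (trP p (kx ⬝ᵥ w)))⁻¹ * μ)
        = epsP p (trP p (u ⬝ᵥ kz)) * (epsP p (trP p (kx ⬝ᵥ w)))⁻¹ * ((starRingEnd ℂ) μ * μ) := by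
          ring
      _ = epsP p (trP p (u ⬝ᵥ kz)) * (epsP p (trP p (kx ⬝ᵥ w)))⁻¹ := by rw [hμ, mul_one]
  rw [hCval] at hkey
  exact cancel_of_ne_one _ _ hkey (epsP_ne_one p _ hδ)
end MAIN


/-- **N-sum box (Lemma 3).** If `M = [M_l | M_r]` is a strongly self-orthogonal
`N × 2N` matrix over a finite field `F` of characteristic `p` (i.e. `rank M = N`
and `M_r M_lᵀ = M_l M_rᵀ`), then there is an orthonormal family of states
`(v_a)_{a ∈ F^N}` in `ℂ^{F^N}` such that applying `X(x_i)Z(z_i)` to the `i`-th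
qudit maps `v_a` to `v_{a + M (x;z)}` up to a global phase. -/
theorem n_sum_box
    (F : Type*) [Field F] [Fintype F] [DecidableEq F]
    (p : ℕ) [Fact p.Prime] [CharP F p] [Algebra (ZMod p) F]
    (N : ℕ) (hN : 1 ≤ N)
    (Ml Mr : Matrix (Fin N) (Fin N) F)
    (hrank : (Matrix.fromCols Ml Mr).rank = N)
    (hSSO : Mr * Ml.transpose = Ml * Mr.transpose) :
    ∃ v : (Fin N → F) → ((Fin N → F) → ℂ),
      (∀ a a' : Fin N → F,
        ∑ f : Fin N → F, (starRingEnd ℂ) (v a f) * v a' f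
          = if a = a' then 1 else 0) ∧
      (∀ a x z : Fin N → F, ∃ c : ℂ, ‖c‖ = 1 ∧
        (Wmat F p N x z).mulVec (v a)
          = c • v (a + (Matrix.fromCols Ml Mr).mulVec (Sum.elim x z))) := by
  classical
  haveI : FiniteDimensional (ZMod p) F := Module.Finite.of_finite (R := ZMod p)
  -- trace witness
  have htr : ∃ s : F, trP (F := F) p s ≠ 0 := by
    have h := Algebra.trace_ne_zero (ZMod p) F
    by_contra hc
    push_neg at hc
    exact h (LinearMap.ext fun a => hc a)
  have hwit : ∀ c : Fin N → F, c ≠ 0 → ∃ y : Fin N → F, trP (F := F) p (y ⬝ᵥ c) ≠ 0 := by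
    intro c hc
    obtain ⟨i, hi⟩ : ∃ i, c i ≠ 0 := by
      by_contra hno; push_neg at hno; exact hc (funext hno)
    obtain ⟨s, hs⟩ := htr
    refine ⟨Pi.single i (s * (c i)⁻¹), ?_⟩
    have hdp : Pi.single i (s * (c i)⁻¹) ⬝ᵥ c = s := by
      rw [dotProduct, Finset.sum_eq_single i]
      · rw [Pi.single_eq_same]; field_simp
      · intro j _ hj; rw [Pi.single_eq_of_ne hj, zero_mul]
      · intro hmem; exact absurd (Finset.mem_univ _) hmem
    rw [hdp]; exact hs
  -- section of the surjection
  choose xa za hxa using fun a => surj_fromColumns Ml Mr hrank a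
  -- joint eigenvector of the stabilizer family
  set s : Finset (Module.End ℂ ((Fin N → F) → ℂ)) :=
    Finset.image (fun y : Fin N → F => WvEnd p (Mrᵀ *ᵥ y) (-(Mlᵀ *ᵥ y))) Finset.univ with hsdef
  have hcomm : ∀ f ∈ s, ∀ g ∈ s, Commute f g := by
    intro f hf g hg
    rw [hsdef, Finset.mem_image] at hf hg
    obtain ⟨y, _, rfl⟩ := hf
    obtain ⟨y', _, rfl⟩ := hg
    exact WvEnd_commute p Ml Mr hSSO y y'
  obtain ⟨v1, hv1ne, hv1eig⟩ :=
    exists_joint_eigenvector s.card ((Fin N → F) → ℂ) inferInstance inferInstance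
      inferInstance inferInstance s le_rfl hcomm
  have heig1 : ∀ y : Fin N → F, ∃ μ : ℂ, Wv p (Mrᵀ *ᵥ y) (-(Mlᵀ *ᵥ y)) v1 = μ • v1 := by
    intro y
    obtain ⟨μ, hμ⟩ := hv1eig (WvEnd p (Mrᵀ *ᵥ y) (-(Mlᵀ *ᵥ y)))
      (by rw [hsdef]; exact Finset.mem_image_of_mem _ (Finset.mem_univ y))
    exact ⟨μ, hμ⟩
  -- normalize
  set nrm : ℝ := ∑ f, Complex.normSq (v1 f) with hnrm
  have hpos : 0 < nrm := by
    obtain ⟨f0, hf0⟩ : ∃ f0, v1 f0 ≠ 0 := by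
      by_contra hno; push_neg at hno; exact hv1ne (funext hno)
    exact Finset.sum_pos' (fun f _ => Complex.normSq_nonneg _)
      ⟨f0, Finset.mem_univ _, Complex.normSq_pos.mpr hf0⟩
  have hs0 : Real.sqrt nrm ≠ 0 := by positivity
  set v₀ : (Fin N → F) → ℂ := ((Real.sqrt nrm : ℂ))⁻¹ • v1 with hv₀def
  have hv₀ip : ∑ f, (starRingEnd ℂ) (v₀ f) * v₀ f = 1 := by
    rw [hv₀def, ip_smul]
    have hsum : ∑ f, (starRingEnd ℂ) (v1 f) * v1 f = (nrm : ℂ) := by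
      rw [hnrm, Complex.ofReal_sum]
      refine Finset.sum_congr rfl fun f _ => ?_
      rw [mul_comm, Complex.mul_conj]
    rw [hsum, map_inv₀, Complex.conj_ofReal]
    rw [← Complex.ofReal_inv, ← Complex.ofReal_mul, ← Complex.ofReal_mul, Complex.ofReal_eq_one]
    have hsq : Real.sqrt nrm * Real.sqrt nrm = nrm := Real.mul_self_sqrt hpos.le
    field_simp
    rw [sq, hsq]
  have hv₀eig : ∀ y : Fin N → F, ∃ μ : ℂ,
      Wv p (Mrᵀ *ᵥ y) (-(Mlᵀ *ᵥ y)) v₀ = μ • v₀ ∧ (starRingEnd ℂ) μ * μ = 1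
        ∧ ‖μ‖ = 1 := by
    intro y
    obtain ⟨μ, hμ⟩ := heig1 y
    have he : Wv p (Mrᵀ *ᵥ y) (-(Mlᵀ *ᵥ y)) v₀ = μ • v₀ := by
      rw [hv₀def, Wv_smul, hμ, smul_comm]
    have h1 : (starRingEnd ℂ) μ * μ = 1 := by
      have h2 : ∑ f, (starRingEnd ℂ) ((μ • v₀) f) * ((μ • v₀) f)
          = ∑ f, (starRingEnd ℂ) (v₀ f) * v₀ f := by
        rw [← he]
        exact Wv_ip p _ _ _ _
      rw [ip_smul, hv₀ip, mul_one] at h2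
      exact h2
    have habs : ‖μ‖ = 1 := by
      have h3 : ‖(starRingEnd ℂ) μ * μ‖ = 1 := by rw [h1]; simp
      rw [norm_mul, Complex.norm_conj] at h3
      nlinarith [norm_nonneg μ]
    exact ⟨μ, he, h1, habs⟩
  refine ⟨fun a => Wv p (xa a) (za a) v₀, ?_, ?_⟩
  · -- orthonormality
    intro a a'
    by_cases haa : a = a'
    · subst haa
      rw [if_pos rfl]
      show ∑ f, (starRingEnd ℂ) (Wv p (xa a) (za a) v₀ f) * Wv p (xa a) (za a) v₀ f = 1
      rw [Wv_ip]
      exact hv₀ip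
    · rw [if_neg haa]
      show ∑ f, (starRingEnd ℂ) (Wv p (xa a) (za a) v₀ f) * Wv p (xa a') (za a') v₀ f = 0
      have e1 : ∑ f, (starRingEnd ℂ) (Wv p (xa a) (za a) v₀ f) * Wv p (xa a') (za a') v₀ f
          = ∑ f, (starRingEnd ℂ)
              ((Wv p (-(xa a)) (-(za a)) (Wv p (xa a) (za a) v₀)) f)
              * (Wv p (-(xa a)) (-(za a)) (Wv p (xa a') (za a') v₀)) f :=
        (Wv_ip p _ _ _ _).symm
      rw [e1, Wv_comp p (-(xa a)) (-(za a)) (xa a) (za a) v₀,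
        Wv_comp p (-(xa a)) (-(za a)) (xa a') (za a') v₀,
        neg_add_cancel (xa a), neg_add_cancel (za a), Wv_zero, ip_smul]
      -- the difference vector
      have hcval : Ml *ᵥ (-(xa a) + xa a') + Mr *ᵥ (-(za a) + za a') = a' - a := by
        calc Ml *ᵥ (-(xa a) + xa a') + Mr *ᵥ (-(za a) + za a')
            = (Ml *ᵥ xa a' + Mr *ᵥ za a') - (Ml *ᵥ xa a + Mr *ᵥ za a) := by
              rw [Matrix.mulVec_add, Matrix.mulVec_add, Matrix.mulVec_neg, Matrix.mulVec_neg]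
              abel
          _ = a' - a := by rw [hxa a, hxa a']
      have hcne : Ml *ᵥ (-(xa a) + xa a') + Mr *ᵥ (-(za a) + za a') ≠ 0 := by
        rw [hcval]
        exact sub_ne_zero.mpr (Ne.symm haa)
      obtain ⟨y, hy⟩ := hwit _ hcne
      obtain ⟨μ, he, hμ1, _⟩ := hv₀eig y
      have hdots : (-(xa a) + xa a') ⬝ᵥ (-(Mlᵀ *ᵥ y)) - (Mrᵀ *ᵥ y) ⬝ᵥ (-(za a) + za a')
          = -(y ⬝ᵥ (Ml *ᵥ (-(xa a) + xa a') + Mr *ᵥ (-(za a) + za a'))) := by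
        have h1 : (-(xa a) + xa a') ⬝ᵥ (Mlᵀ *ᵥ y) = y ⬝ᵥ (Ml *ᵥ (-(xa a) + xa a')) := by
          rw [dotProduct_comm, dot_aux]
        have h2 : (Mrᵀ *ᵥ y) ⬝ᵥ (-(za a) + za a') = y ⬝ᵥ (Mr *ᵥ (-(za a) + za a')) :=
          dot_aux Mr y _
        rw [dotProduct_neg, h1, h2, dotProduct_add]
        ring
      have hδ : trP (F := F) p
          ((-(xa a) + xa a') ⬝ᵥ (-(Mlᵀ *ᵥ y)) - (Mrᵀ *ᵥ y) ⬝ᵥ (-(za a) + za a')) ≠ 0 := by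
        rw [hdots]
        have hneg : trP (F := F) p
            (-(y ⬝ᵥ (Ml *ᵥ (-(xa a) + xa a') + Mr *ᵥ (-(za a) + za a'))))
            = -trP (F := F) p (y ⬝ᵥ (Ml *ᵥ (-(xa a) + xa a') + Mr *ᵥ (-(za a) + za a'))) := by
          simp [trP]
        rw [hneg, neg_ne_zero]
        exact hy
      have hzero := ip_Wv_zero p Ml Mr v₀ (-(xa a) + xa a') (-(za a) + za a') y μ hμ1 he hδ
      rw [hzero, mul_zero]
  · -- covariance
    intro a x z
    set b := a + (Matrix.fromCols Ml Mr).mulVec (Sum.elim x z) with hbdef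
    have hbeq : b = a + (Ml *ᵥ x + Mr *ᵥ z) := by
      rw [hbdef, Matrix.fromCols_mulVec_sumElim]
    have hd : Ml *ᵥ (x + xa a - xa b) + Mr *ᵥ (z + za a - za b) = 0 := by
      calc Ml *ᵥ (x + xa a - xa b) + Mr *ᵥ (z + za a - za b)
          = (Ml *ᵥ x + Mr *ᵥ z) + (Ml *ᵥ xa a + Mr *ᵥ za a)
            - (Ml *ᵥ xa b + Mr *ᵥ za b) := by
            rw [Matrix.mulVec_sub, Matrix.mulVec_add, Matrix.mulVec_sub, Matrix.mulVec_add]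
            abel
        _ = (Ml *ᵥ x + Mr *ᵥ z) + a - b := by rw [hxa a, hxa b]
        _ = 0 := by rw [hbeq]; abel
    obtain ⟨y, hy1, hy2⟩ := ker_fromColumns Ml Mr hrank hSSO _ _ hd
    obtain ⟨μ, he, _, habs⟩ := hv₀eig y
    have hxeq : x + xa a = xa b + Mrᵀ *ᵥ y := by
      rw [← hy1]; abel
    have hzeq : z + za a = za b + -(Mlᵀ *ᵥ y) := by
      rw [← hy2]; abel
    have hstep2 : Wv p (xa b + Mrᵀ *ᵥ y) (za b + -(Mlᵀ *ᵥ y)) v₀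
        = (epsP p (trP p ((Mrᵀ *ᵥ y) ⬝ᵥ za b)))⁻¹ • (μ • Wv p (xa b) (za b) v₀) := by
      rw [eq_inv_smul_iff₀ (epsP_ne_zero p _),
        ← Wv_comp p (xa b) (za b) (Mrᵀ *ᵥ y) (-(Mlᵀ *ᵥ y)) v₀, he, Wv_smul]
    refine ⟨epsP p (trP p (xa a ⬝ᵥ z))
        * ((epsP p (trP p ((Mrᵀ *ᵥ y) ⬝ᵥ za b)))⁻¹ * μ), ?_, ?_⟩
    · rw [norm_mul, norm_mul, norm_inv, abs_epsP, abs_epsP, habs]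
      norm_num
    · show (Wmat F p N x z).mulVec (Wv p (xa a) (za a) v₀)
          = _ • Wv p (xa b) (za b) v₀
      calc (Wmat F p N x z).mulVec (Wv p (xa a) (za a) v₀)
          = Wv p x z (Wv p (xa a) (za a) v₀) := by rw [Wmat_mulVec]
        _ = epsP p (trP p (xa a ⬝ᵥ z)) • Wv p (x + xa a) (z + za a) v₀ :=
            Wv_comp p x z (xa a) (za a) v₀
        _ = epsP p (trP p (xa a ⬝ᵥ z))
              • Wv p (xa b + Mrᵀ *ᵥ y) (za b + -(Mlᵀ *ᵥ y)) v₀ := by rw [hxeq, hzeq]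
        _ = epsP p (trP p (xa a ⬝ᵥ z))
              • ((epsP p (trP p ((Mrᵀ *ᵥ y) ⬝ᵥ za b)))⁻¹ • (μ • Wv p (xa b) (za b) v₀)) := by
            rw [hstep2]
        _ = (epsP p (trP p (xa a ⬝ᵥ z))
              * ((epsP p (trP p ((Mrᵀ *ᵥ y) ⬝ᵥ za b)))⁻¹ * μ)) • Wv p (xa b) (za b) v₀ := by
            rw [smul_smul, smul_smul, mul_assoc]
end

section
/- Existence of a classical erasure-robust sum-network code (Lemma 4): Let S, K, T, l ≥ 1 be integers, let N : Fin S → ℕ, let 𝒲 : Fin K → Finset (Fin S) specify the servers storing each data stream, and let ℰ : Fin T → Finset (Fin S) specify the possible erasure patterns. Let F be a finite field with |F| > ∑_{s} N(s). Suppose that for all k ∈ Fin K and t ∈ Fin T: ∑_{s ∈ ℰ(t)} N(s) ≤ ∑_{s ∈ 𝒲(k)} N(s) − l. Then there exist encoding functions enc : (s : Fin S) → ((Fin K → Fin l → F) → (Fin (N s) → F)) and decoding functions dec : (t : Fin T) → (((s : Fin S) → Fin (N s) → F) → (Fin l → F)) such that: (locality) for every s and all data realizations w, w' : Fin K → Fin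 l → F with w k = w' k for every k with s ∈ 𝒲(k), one has enc s w = enc s w'; and (correctness under erasures) for every t ∈ Fin T, every w : Fin K → Fin l → F, and every a : (s : Fin S) → Fin (N s) → F with a s = enc s w for all s ∉ ℰ(t), one has dec t a = (fun j => ∑_{k ∈ Fin K} w k j). -/
open Polynomial Finset

/-- **Existence of a classical erasure-robust sum-network code (Lemma 4).**
With `S` servers, `K` data streams (stream `k` stored on the servers in `𝒲 k`),
erasure patterns `ℰ t`, batch size `l`, server `s` sending `N s` symbols of a
finite field `F` with `|F| > ∑ s, N s`, if
`∑_{s ∈ ℰ t} N s ≤ ∑_{s ∈ 𝒲 k} N s − l` for all `k, t`, then there are encoders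
(each depending only on the streams stored at the server) and decoders (one per
erasure pattern, using only the non-erased transmissions) computing the sum
`∑ k, w k` of all data streams. -/
theorem classical_erasure_robust_sum_code
    (S K T l : ℕ) (hS : 1 ≤ S) (hK : 1 ≤ K) (hT : 1 ≤ T) (hl : 1 ≤ l)
    (N : Fin S → ℕ)
    (𝒲 : Fin K → Finset (Fin S)) (ℰ : Fin T → Finset (Fin S))
    (F : Type*) [Field F] [Fintype F] [DecidableEq F]
    (hF : Fintype.card F > ∑ s, N s)
    (hcond : ∀ (k : Fin K) (t : Fin T),
      (∑ s ∈ ℰ t, (N s : ℤ)) ≤ (∑ s ∈ 𝒲 k, (N s : ℤ)) - (l : ℤ)) :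
    ∃ (enc : (s : Fin S) → (Fin K → Fin l → F) → (Fin (N s) → F))
      (dec : (t : Fin T) → ((s : Fin S) → Fin (N s) → F) → (Fin l → F)),
      (∀ (s : Fin S) (w w' : Fin K → Fin l → F),
        (∀ k : Fin K, s ∈ 𝒲 k → w k = w' k) → enc s w = enc s w') ∧
      (∀ (t : Fin T) (w : Fin K → Fin l → F)
        (a : (s : Fin S) → Fin (N s) → F),
        (∀ s : Fin S, s ∉ ℰ t → a s = enc s w) →
        dec t a = fun j => ∑ k : Fin K, w k j) := by
  classical
  -- distinct nonzero evaluation points, one for each transmitted symbol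
  obtain ⟨β⟩ : Nonempty ((Σ s : Fin S, Fin (N s)) ↪ Fˣ) := by
    rw [Function.Embedding.nonempty_iff_card_le, Fintype.card_sigma, Fintype.card_units]
    simp only [Fintype.card_fin]
    omega
  set ν : (Σ s : Fin S, Fin (N s)) → F := fun i => (β i : F) with hν
  have hνinj : Function.Injective ν := fun a b h => β.injective (Units.ext h)
  have hνne : ∀ i : (Σ s : Fin S, Fin (N s)), ν i ≠ 0 := fun i => Units.ne_zero (β i)
  -- the "outside" index sets and "available" index sets as finsets
  set outF : Fin K → Finset (Σ s : Fin S, Fin (N s)) :=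
    fun k => ((𝒲 k)ᶜ).sigma fun _ => Finset.univ with houtF
  set availF : Fin T → Finset (Σ s : Fin S, Fin (N s)) :=
    fun t => ((ℰ t)ᶜ).sigma fun _ => Finset.univ with havailF
  have hmem_out : ∀ (k : Fin K) (i : Σ s : Fin S, Fin (N s)), i ∈ outF k ↔ i.1 ∉ 𝒲 k := by
    intro k i; simp [outF, Finset.mem_sigma]
  have hmem_avail : ∀ (t : Fin T) (i : Σ s : Fin S, Fin (N s)), i ∈ availF t ↔ i.1 ∉ ℰ t := by
    intro t i; simp [availF, Finset.mem_sigma]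
  have hcard_out : ∀ k : Fin K, (outF k).card = ∑ s ∈ (𝒲 k)ᶜ, N s := by
    intro k; simp [outF, Finset.card_sigma]
  have hcard_avail : ∀ t : Fin T, (availF t).card = ∑ s ∈ (ℰ t)ᶜ, N s := by
    intro t; simp [availF, Finset.card_sigma]
  -- key numeric inequality
  have hnum : ∀ (k : Fin K) (t : Fin T),
      l + (outF k).card ≤ (availF t).card := by
    intro k t
    rw [hcard_out, hcard_avail]
    have h1 : ∑ s ∈ 𝒲 k, N s + ∑ s ∈ (𝒲 k)ᶜ, N s = ∑ s, N s :=
      Finset.sum_add_sum_compl _ _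
    have h2 : ∑ s ∈ ℰ t, N s + ∑ s ∈ (ℰ t)ᶜ, N s = ∑ s, N s :=
      Finset.sum_add_sum_compl _ _
    have h3 := hcond k t
    have h1' : ((∑ s ∈ 𝒲 k, N s : ℕ) : ℤ) + ((∑ s ∈ (𝒲 k)ᶜ, N s : ℕ) : ℤ)
        = ((∑ s, N s : ℕ) : ℤ) := by exact_mod_cast congrArg (Nat.cast (R := ℤ)) h1
    have h2' : ((∑ s ∈ ℰ t, N s : ℕ) : ℤ) + ((∑ s ∈ (ℰ t)ᶜ, N s : ℕ) : ℤ)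
        = ((∑ s, N s : ℕ) : ℤ) := by exact_mod_cast congrArg (Nat.cast (R := ℤ)) h2
    have h3' : ((∑ s ∈ ℰ t, N s : ℕ) : ℤ) ≤ ((∑ s ∈ 𝒲 k, N s : ℕ) : ℤ) - l := by
      push_cast; push_cast at h3; linarith
    have : ((l + ∑ s ∈ (𝒲 k)ᶜ, N s : ℕ) : ℤ) ≤ ((∑ s ∈ (ℰ t)ᶜ, N s : ℕ) : ℤ) := by
      push_cast; linarith
    exact_mod_cast this
  -- the vanishing polynomial for stream `k`
  set Z : Fin K → F[X] := fun k => ∏ i ∈ outF k, (X - C (ν i)) with hZ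
  have hZmonic : ∀ k, (Z k).Monic := fun k =>
    Polynomial.monic_prod_of_monic _ _ fun i _ => Polynomial.monic_X_sub_C _
  have hZdeg : ∀ k, (Z k).natDegree = (outF k).card := by
    intro k
    rw [hZ]
    rw [Polynomial.natDegree_prod _ _ (fun i _ => Polynomial.X_sub_C_ne_zero (ν i))]
    simp [Polynomial.natDegree_X_sub_C]
  have hZroot : ∀ (k : Fin K) (i : Σ s : Fin S, Fin (N s)),
      i.1 ∉ 𝒲 k → (Z k).eval (ν i) = 0 := by
    intro k i hi
    rw [hZ]
    simp only [Polynomial.eval_prod]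
    exact Finset.prod_eq_zero ((hmem_out k i).2 hi) (by simp)
  have hZcop : ∀ k, IsCoprime ((X : F[X]) ^ l) (Z k) := by
    intro k
    refine IsCoprime.pow_left ?_
    rw [(Polynomial.irreducible_X (R := F)).coprime_iff_not_dvd, Polynomial.X_dvd_iff,
      Polynomial.coeff_zero_eq_eval_zero, hZ, Polynomial.eval_prod]
    refine Finset.prod_ne_zero_iff.2 fun i _ => ?_
    simp only [Polynomial.eval_sub, Polynomial.eval_X, Polynomial.eval_C]
    intro h
    exact hνne i (by linear_combination -h)
  -- the message polynomial
  set W : (Fin l → F) → F[X] := fun u => ∑ j : Fin l, C (u j) * X ^ (j : ℕ) with hW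
  have hWcoeff : ∀ (u : Fin l → F) (j : Fin l), (W u).coeff (j : ℕ) = u j := by
    intro u j
    rw [hW]
    simp only [Polynomial.finset_sum_coeff, Polynomial.coeff_C_mul, Polynomial.coeff_X_pow]
    rw [Finset.sum_eq_single j (fun b _ hb => by simp [Fin.val_eq_val, hb.symm]) (by simp)]
    simp
  -- existence of the encoding polynomials
  have key : ∀ (k : Fin K) (u : Fin l → F), ∃ f : F[X],
      (∀ i : Σ s : Fin S, Fin (N s), i.1 ∉ 𝒲 k → f.eval (ν i) = 0) ∧
      ((X : F[X]) ^ l ∣ f - W u) ∧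
      f.degree < ((l + (outF k).card : ℕ) : WithBot ℕ) := by
    intro k u
    obtain ⟨p, q, hpq⟩ := hZcop k
    refine ⟨((q * W u) %ₘ ((X : F[X]) ^ l)) * Z k, ?_, ?_, ?_⟩
    · intro i hi
      rw [Polynomial.eval_mul, hZroot k i hi, mul_zero]
    · have hmod := Polynomial.modByMonic_add_div (q * W u)
        ((X : F[X]) ^ l)
      set r := (q * W u) %ₘ ((X : F[X]) ^ l) with hr
      set d := (q * W u) /ₘ ((X : F[X]) ^ l) with hd
      refine ⟨- (p * W u) - d * Z k, ?_⟩
      have hq1 : r = q * W u - (X : F[X]) ^ l * d := by linear_combination hmod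
      have hp1 : q * Z k = 1 - p * (X : F[X]) ^ l := by linear_combination hpq
      calc r * Z k - W u = (q * Z k) * W u - (X : F[X]) ^ l * d * Z k - W u := by
            rw [hq1]; ring
        _ = (X : F[X]) ^ l * (- (p * W u) - d * Z k) := by rw [hp1]; ring
    · rcases eq_or_ne ((q * W u) %ₘ ((X : F[X]) ^ l)) 0 with h0 | h0
      · rw [h0, zero_mul, Polynomial.degree_zero]
        exact_mod_cast WithBot.bot_lt_coe _
      · rw [Polynomial.degree_mul]
        have hd1 : ((q * W u) %ₘ ((X : F[X]) ^ l)).natDegree < l := by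
          have h := Polynomial.degree_modByMonic_lt (q * W u)
            (Polynomial.monic_X_pow l (R := F))
          rw [Polynomial.degree_X_pow] at h
          exact (Polynomial.natDegree_lt_iff_degree_lt h0).2 h
        rw [Polynomial.degree_eq_natDegree h0,
          Polynomial.degree_eq_natDegree (hZmonic k).ne_zero, hZdeg]
        exact_mod_cast Nat.add_lt_add_right hd1 ((outF k).card)
  choose f hf0 hfdvd hfdeg using key
  -- the encoder and decoder
  refine ⟨fun s w i => ∑ k ∈ Finset.univ.filter (fun k => s ∈ 𝒲 k),
      (f k (w k)).eval (ν ⟨s, i⟩),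
    fun t a j => (Lagrange.interpolate (availF t) ν (fun i => a i.1 i.2)).coeff (j : ℕ),
    ?_, ?_⟩
  · -- locality
    intro s w w' hww'
    funext i
    refine Finset.sum_congr rfl fun k hk => ?_
    rw [Finset.mem_filter] at hk
    rw [hww' k hk.2]
  · -- correctness
    intro t w a ha
    funext j
    show (Lagrange.interpolate (availF t) ν fun i => a i.1 i.2).coeff (j : ℕ) = _
    set g : F[X] := ∑ k : Fin K, f k (w k) with hg
    have hdeg : g.degree < (((availF t).card : ℕ) : WithBot ℕ) := by
      rw [hg]
      refine lt_of_le_of_lt (Polynomial.degree_sum_le _ _) ?_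
      rw [Finset.sup_lt_iff (by
        have := hnum ⟨0, hK⟩ t
        have hpos : 0 < (availF t).card := by omega
        exact_mod_cast WithBot.bot_lt_coe _)]
      intro k _
      refine lt_of_lt_of_le (hfdeg k (w k)) ?_
      exact_mod_cast hnum k t
    have hval : ∀ i ∈ availF t, g.eval (ν i) = a i.1 i.2 := by
      intro i hi
      have hi' : i.1 ∉ ℰ t := (hmem_avail t i).1 hi
      rw [ha i.1 hi']
      rw [hg, Polynomial.eval_finset_sum]
      refine (Finset.sum_subset (Finset.filter_subset _ _) ?_).symm
      intro k _ hk
      simp only [Finset.mem_filter, Finset.mem_univ, true_and] at hk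
      exact hf0 k (w k) ⟨i.1, i.2⟩ hk
    have hint : g = Lagrange.interpolate (availF t) ν (fun i => a i.1 i.2) :=
      Lagrange.eq_interpolate_of_eval_eq _ (hνinj.injOn) hdeg hval
    rw [← hint, hg, Polynomial.finset_sum_coeff]
    refine Finset.sum_congr rfl fun k _ => ?_
    obtain ⟨q, hq⟩ := hfdvd k (w k)
    have hfeq : f k (w k) = W (w k) + q * (X : F[X]) ^ l := by linear_combination hq
    rw [hfeq, Polynomial.coeff_add, hWcoeff, Polynomial.coeff_mul_X_pow']
    simp [Nat.not_le.2 j.isLt]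
end

section
/- Coset characterization for the N-sum box relabeling: Let F be a field, N ≥ 1, and let M_l, M_r ∈ F^{N×N} be such that M = [M_l | M_r] ∈ F^{N×2N} has rank N and M_r M_lᵀ = M_l M_rᵀ. Define G = [M_rᵀ; −M_lᵀ] ∈ F^{2N×N}. Then M * G = 0, and for all vectors s, t ∈ F^{2N}: M·s = M·t if and only if s − t lies in the column span of G, i.e., if and only if there exists c ∈ F^N with s − t = G·c. Equivalently, the kernel of the linear map v ↦ M·v equals the range of the linear map c ↦ G·c. -/
/-- **Coset characterization for the N-sum box relabeling.** Let
`M = [M_l | M_r]` be a strongly self-orthogonal `N × 2N` matrix over a field `F`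
(`rank M = N` and `M_r M_lᵀ = M_l M_rᵀ`) and `G = [M_rᵀ; −M_lᵀ]`. Then
`M * G = 0`; for all `s, t ∈ F^{2N}`, `M s = M t` iff `s − t` is in the column
span of `G`; and the kernel of `v ↦ M v` equals the range of `c ↦ G c`. -/
theorem coset_characterization
    (F : Type*) [Field F] (N : ℕ) (hN : 1 ≤ N)
    (Ml Mr : Matrix (Fin N) (Fin N) F)
    (hrank : (Matrix.fromCols Ml Mr).rank = N)
    (hSSO : Mr * Ml.transpose = Ml * Mr.transpose) :
    Matrix.fromCols Ml Mr * Matrix.fromRows Mr.transpose (-Ml.transpose) = 0 ∧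
    (∀ s t : Fin N ⊕ Fin N → F,
      (Matrix.fromCols Ml Mr).mulVec s = (Matrix.fromCols Ml Mr).mulVec t ↔
        ∃ c : Fin N → F,
          s - t = (Matrix.fromRows Mr.transpose (-Ml.transpose)).mulVec c) ∧
    LinearMap.ker (Matrix.fromCols Ml Mr).mulVecLin
      = LinearMap.range (Matrix.fromRows Mr.transpose (-Ml.transpose)).mulVecLin := by
  set M := Matrix.fromCols Ml Mr with hM
  set G := Matrix.fromRows Mr.transpose (-Ml.transpose) with hG
  have hMG : M * G = 0 := by
    rw [hM, hG, Matrix.fromCols_mul_fromRows, Matrix.mul_neg, hSSO, add_neg_cancel]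
  -- range G ≤ ker M
  have hle : LinearMap.range G.mulVecLin ≤ LinearMap.ker M.mulVecLin := by
    rintro x ⟨c, rfl⟩
    simp only [LinearMap.mem_ker, Matrix.mulVecLin_apply]
    rw [Matrix.mulVec_mulVec, hMG, Matrix.zero_mulVec]
  -- rank G = N
  have hrangeG : LinearMap.range (Matrix.fromCols Mr (-Ml)).mulVecLin
      = LinearMap.range M.mulVecLin := by
    apply le_antisymm
    · rintro x ⟨c, rfl⟩
      refine ⟨Sum.elim (-(c ∘ Sum.inr)) (c ∘ Sum.inl), ?_⟩
      have hce : c = Sum.elim (c ∘ Sum.inl) (c ∘ Sum.inr) := by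
        ext (i | i) <;> rfl
      simp only [Matrix.mulVecLin_apply, hM, Matrix.fromCols_mulVec_sumElim]
      conv_rhs => rw [hce]
      rw [Matrix.fromCols_mulVec_sumElim, Matrix.neg_mulVec, Matrix.mulVec_neg]
      abel
    · rintro x ⟨c, rfl⟩
      refine ⟨Sum.elim (c ∘ Sum.inr) (-(c ∘ Sum.inl)), ?_⟩
      have hce : c = Sum.elim (c ∘ Sum.inl) (c ∘ Sum.inr) := by
        ext (i | i) <;> rfl
      simp only [Matrix.mulVecLin_apply, hM, Matrix.fromCols_mulVec_sumElim]
      conv_rhs => rw [hce]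
      rw [Matrix.fromCols_mulVec_sumElim, Matrix.neg_mulVec, Matrix.mulVec_neg]
      abel
  have hrankG : G.rank = N := by
    have ht : G.transpose = Matrix.fromCols Mr (-Ml) := by
      rw [hG, Matrix.transpose_fromRows, Matrix.transpose_transpose, Matrix.transpose_neg,
        Matrix.transpose_transpose]
    have h1 := Matrix.rank_transpose G
    rw [ht] at h1
    have h2 : (Matrix.fromCols Mr (-Ml)).rank = M.rank := by
      unfold Matrix.rank
      rw [hrangeG]
    rw [← h1, h2, hrank]
  -- finrank computations
  have hkerM : Module.finrank F (LinearMap.ker M.mulVecLin) = N := by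
    have hrn := LinearMap.finrank_range_add_finrank_ker M.mulVecLin
    have hdom : Module.finrank F (Fin N ⊕ Fin N → F) = N + N := by
      simp [Module.finrank_pi]
    rw [hdom] at hrn
    have hr : Module.finrank F (LinearMap.range M.mulVecLin) = N := hrank
    omega
  have hrG : Module.finrank F (LinearMap.range G.mulVecLin) = N := hrankG
  have hkey : LinearMap.ker M.mulVecLin = LinearMap.range G.mulVecLin := by
    symm
    apply Submodule.eq_of_le_of_finrank_eq hle
    rw [hkerM, hrG]
  refine ⟨hMG, ?_, hkey⟩
  intro s t
  constructor
  · intro h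
    have hmem : s - t ∈ LinearMap.ker M.mulVecLin := by
      simp only [LinearMap.mem_ker, Matrix.mulVecLin_apply, Matrix.mulVec_sub, h, sub_self]
    rw [hkey] at hmem
    obtain ⟨c, hc⟩ := hmem
    exact ⟨c, hc.symm⟩
  · rintro ⟨c, hc⟩
    have hmem : s - t ∈ LinearMap.range G.mulVecLin := ⟨c, hc.symm⟩
    rw [← hkey] at hmem
    have h0 : M.mulVec (s - t) = 0 := hmem
    rw [Matrix.mulVec_sub, sub_eq_zero] at h0
    exact h0
end

section
/- Existence of the erasure-protection matrix U: Let F be a finite field, let T ≥ 1 and N ≥ 1 be integers with |F| > T·N, let m : Fin T → ℕ, and for each t ∈ Fin T let E_t ∈ F^{N × m(t)} be a matrix of full column rank m(t). Set u := N − max_{t ∈ Fin T} m(t). Then there exists a matrix U ∈ F^{N × u} such that for every t ∈ Fin T, the concatenated matrix [U | E_t] ∈ F^{N × (u + m(t))} has full column rank u + m(t). -/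
open Module Submodule Set Matrix

/-- Reindexing equivalence used to add one vector to the `U`-part of a sum family. -/
def optSumEquiv (k M : ℕ) : Option (Fin k ⊕ Fin M) ≃ (Fin (k + 1) ⊕ Fin M) where
  toFun o := o.elim (Sum.inl 0) (Sum.map Fin.succ id)
  invFun s := s.elim (fun i => Fin.cases none (fun j => some (Sum.inl j)) i)
    (fun j => some (Sum.inr j))
  left_inv o := by rcases o with _ | (i | j) <;> simp
  right_inv s := by
    rcases s with i | j
    · exact Fin.cases rfl (fun j => by simp) i
    · simp

/-- Greedy construction: as long as `k + m t ≤ N` for all `t`, we can find `k` vectors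
completing each column family of `E t` to an independent family. -/
lemma exists_complement_family
    (F : Type*) [Field F] [Fintype F] [DecidableEq F]
    (T N : ℕ) (hT : 1 ≤ T)
    (hq : Fintype.card F > T)
    (m : Fin T → ℕ)
    (g : (t : Fin T) → Fin (m t) → (Fin N → F))
    (hg : ∀ t, LinearIndependent F (g t)) :
    ∀ k : ℕ, (∀ t, k + m t ≤ N) →
      ∃ f : Fin k → (Fin N → F), ∀ t, LinearIndependent F (Sum.elim f (g t)) := by
  classical
  intro k
  induction k with
  | zero =>
    intro _
    refine ⟨Fin.elim0, fun t => ?_⟩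
    rw [linearIndependent_sum]
    refine ⟨linearIndependent_empty_type, hg t, ?_⟩
    simp [Set.range_eq_empty]
  | succ k ih =>
    intro hk
    obtain ⟨f, hf⟩ := ih (fun t => by have := hk t; omega)
    have hN1 : 1 ≤ N := by have := hk ⟨0, hT⟩; omega
    -- each span of the current family is small
    set W : Fin T → Submodule F (Fin N → F) :=
      fun t => Submodule.span F (Set.range (Sum.elim f (g t))) with hW
    have hfinrank : ∀ t, Module.finrank F (W t) = k + m t := by
      intro t
      have := finrank_span_eq_card (hf t)
      simpa [Fintype.card_sum] using this
    have hq2 : 2 ≤ Fintype.card F := Fintype.one_lt_card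
    have hcardW : ∀ t, Fintype.card (W t) ≤ Fintype.card F ^ (N - 1) := by
      intro t
      rw [card_eq_pow_finrank (K := F) (V := W t), hfinrank t]
      exact Nat.pow_le_pow_right (by omega) (by have := hk t; omega)
    -- find a vector outside all the spans
    set S : Finset (Fin N → F) :=
      Finset.univ.biUnion (fun t => (W t : Set (Fin N → F)).toFinset) with hS
    have hScard : S.card < Fintype.card (Fin N → F) := by
      calc S.card ≤ ∑ t : Fin T, ((W t : Set (Fin N → F)).toFinset).card :=
            Finset.card_biUnion_le
        _ ≤ ∑ _t : Fin T, Fintype.card F ^ (N - 1) := by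
            refine Finset.sum_le_sum fun t _ => ?_
            rw [Set.toFinset_card]
            exact hcardW t
        _ = T * Fintype.card F ^ (N - 1) := by simp [mul_comm]
        _ < Fintype.card F * Fintype.card F ^ (N - 1) := by
            have hp : 0 < Fintype.card F ^ (N - 1) := Nat.pow_pos (by omega)
            exact Nat.mul_lt_mul_of_pos_right hq hp
        _ = Fintype.card F ^ N := by
            rw [← pow_succ']
            congr 1
            omega
        _ = Fintype.card (Fin N → F) := by simp [Fintype.card_fun]
    have hSex : ∃ v, v ∉ S := by
      by_contra h
      push_neg at h
      have : S = Finset.univ := Finset.eq_univ_iff_forall.2 h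
      rw [this, Finset.card_univ] at hScard
      exact lt_irrefl _ hScard
    obtain ⟨v, hv⟩ := hSex
    have hvW : ∀ t, v ∉ W t := by
      intro t hmem
      exact hv (Finset.mem_biUnion.2 ⟨t, Finset.mem_univ t,
        Set.mem_toFinset.2 hmem⟩)
    refine ⟨Fin.cons v f, fun t => ?_⟩
    -- transport along the reindexing equivalence
    have hcomp : (Sum.elim (Fin.cons v f) (g t)) ∘ (optSumEquiv k (m t)) =
        fun o => Option.elim o v (Sum.elim f (g t)) := by
      funext o
      rcases o with _ | (i | j) <;>
        simp [optSumEquiv, Fin.cons_zero, Fin.cons_succ]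
    rw [← linearIndependent_equiv (optSumEquiv k (m t)), hcomp]
    rw [linearIndependent_option]
    exact ⟨hf t, hvW t⟩

/-- **Existence of the erasure-protection matrix U.** Let `F` be a finite field
with `|F| > T·N`, and for each `t` let `E t` be an `N × m t` matrix of full
column rank `m t`. With `u = N − max_t (m t)`, there exists an `N × u` matrix
`U` such that `[U | E t]` has full column rank `u + m t` for every `t`. -/
theorem exists_protection_matrix_U
    (F : Type*) [Field F] [Fintype F] [DecidableEq F]
    (T N : ℕ) (hT : 1 ≤ T) (hN : 1 ≤ N)
    (hq : Fintype.card F > T * N)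
    (m : Fin T → ℕ)
    (E : (t : Fin T) → Matrix (Fin N) (Fin (m t)) F)
    (hE : ∀ t, (E t).rank = m t) :
    ∃ U : Matrix (Fin N) (Fin (N - Finset.univ.sup m)) F,
      ∀ t : Fin T,
        (Matrix.fromCols U (E t)).rank = (N - Finset.univ.sup m) + m t := by
  classical
  set u : ℕ := N - Finset.univ.sup m with hu
  -- columns of `E t` are linearly independent
  have hgind : ∀ t, LinearIndependent F ((E t)ᵀ) := by
    intro t
    refine linearIndependent_iff_card_eq_finrank_span.mpr ?_
    rw [Fintype.card_fin, Set.finrank]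
    change m t = finrank F (span F (range (E t).col))
    rw [← Matrix.rank_eq_finrank_span_cols]
    exact (hE t).symm
  have hmle : ∀ t, m t ≤ Finset.univ.sup m := fun t =>
    Finset.le_sup (Finset.mem_univ t)
  have hsuple : Finset.univ.sup m ≤ N := by
    refine Finset.sup_le fun t _ => ?_
    have := Matrix.rank_le_height (E t)
    rw [hE t] at this
    exact this
  have hqT : Fintype.card F > T := lt_of_le_of_lt
    (Nat.le_mul_of_pos_right T hN) hq
  obtain ⟨f, hf⟩ := exists_complement_family F T N hT hqT m (fun t => (E t)ᵀ)
    hgind u (fun t => by have := hmle t; omega)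
  refine ⟨(Matrix.of f)ᵀ, fun t => ?_⟩
  rw [Matrix.rank_eq_finrank_span_cols, Matrix.col_eq_transpose, Matrix.transpose_fromCols,
    Matrix.transpose_transpose]
  have hrange : Set.range (Matrix.of.symm (Matrix.fromRows (Matrix.of f) (E t)ᵀ)) =
      Set.range (Sum.elim f ((E t)ᵀ)) := by
    congr 1
  rw [hrange]
  have := (linearIndependent_iff_card_eq_finrank_span.mp (hf t)).symm
  rw [Set.finrank] at this
  rw [this]
  simp [Fintype.card_sum]
end

section
/- Existence of the decoding matrix V_dec: Let F be a finite field, let K ≥ 1, N ≥ 1, l ≥ 1 be integers with |F| > K·l, let r : Fin K → ℕ, and for each k ∈ Fin K let U_k ∈ F^{N × r(k)} be a matrix of full column rank r(k) and V'_k ∈ F^{r(k) × l} a matrix of full column rank l. Then there exists a matrix V_dec ∈ F^{l × N} such that for every k ∈ Fin K, the l × l matrix V_dec * U_k * V'_k is invertible. -/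
/-!
Vdec is built one index at a time. Each `M k = U k * V' k` has a left inverse `B`. If `V`
already works for a set `s` of indices and `i ∉ s`, then for each `j ∈ insert i s` the
determinant of `(V + t • B) * M j` is a polynomial in `t` of degree at most `l` which is
nonzero: its constant term is `det (V * M j)` for `j ∈ s`, its coefficient of `t ^ l` is
`det (B * M i) = 1` for `j = i`. These polynomials have at most `K * l < |F|` roots in
total, so some `t` avoids them all and `V + t • B` works for `insert i s`.
-/

open Matrix Polynomial

section

variable {F : Type*} [Field F]

theorem Matrix.exists_mul_eq_one_of_rank_eq_card {m n : Type*} [Fintype m] [Fintype n]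
    [DecidableEq m] [DecidableEq n] (M : Matrix m n F) (h : M.rank = Fintype.card n) :
    ∃ B : Matrix n m F, B * M = 1 := by
  have hker : LinearMap.ker M.mulVecLin = ⊥ := by
    have := M.mulVecLin.finrank_range_add_finrank_ker
    rw [Module.finrank_fintype_fun_eq_card, ← Matrix.rank, h, add_eq_left,
      Submodule.finrank_eq_zero] at this
    exact this
  obtain ⟨g, hg⟩ := M.mulVecLin.exists_leftInverse_of_injective hker
  refine ⟨LinearMap.toMatrix' g, Matrix.toLin'.injective ?_⟩
  rw [Matrix.toLin'_mul, Matrix.toLin'_toMatrix', Matrix.toLin'_one, ← hg]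
  rfl

theorem Matrix.card_le_of_det_smul_add_eq_zero {n : Type*} [Fintype n] [DecidableEq n]
    {A B : Matrix n n F} (hAB : IsUnit A ∨ IsUnit B) {Z : Finset F}
    (hZ : ∀ t ∈ Z, (t • A + B).det = 0) : Z.card ≤ Fintype.card n := by
  have hp : det ((X : F[X]) • A.map C + B.map C) ≠ 0 := by
    intro h0
    rcases hAB with hA | hB
    · have hcoeff := coeff_det_X_add_C_card A B
      rw [h0, coeff_zero] at hcoeff
      exact ((isUnit_iff_isUnit_det A).mp hA).ne_zero hcoeff.symm
    · have hcoeff := coeff_det_X_add_C_zero A B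
      rw [h0, coeff_zero] at hcoeff
      exact ((isUnit_iff_isUnit_det B).mp hB).ne_zero hcoeff.symm
  have heval : ∀ t, (det ((X : F[X]) • A.map C + B.map C)).eval t = (t • A + B).det := by
    intro t
    rw [← coe_evalRingHom, RingHom.map_det]
    congr 1
    ext i j
    simp only [RingHom.mapMatrix_apply, map_apply, add_apply, smul_apply, smul_eq_mul,
      coe_evalRingHom, eval_add, eval_mul, eval_X, eval_C]
  refine (card_le_degree_of_subset_roots fun t ht => ?_).trans (natDegree_det_X_add_C_le A B)
  exact (mem_roots hp).mpr (by rw [IsRoot, heval]; exact hZ t ht)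

theorem Matrix.exists_forall_isUnit_add_smul_mul [Fintype F] {ι m n : Type*} [Fintype m]
    [Fintype n] [DecidableEq n] (V B : Matrix n m F) (M : ι → Matrix m n F) (s : Finset ι)
    (hs : ∀ j ∈ s, IsUnit (B * M j) ∨ IsUnit (V * M j))
    (hcard : s.card * Fintype.card n < Fintype.card F) :
    ∃ t : F, ∀ j ∈ s, IsUnit ((V + t • B) * M j) := by
  classical
  set bad : Finset F :=
    s.biUnion fun j => Finset.univ.filter fun t => ¬IsUnit ((V + t • B) * M j)
  have hbad : bad.card < Fintype.card F := by
    refine lt_of_le_of_lt (Finset.card_biUnion_le_card_mul _ _ _ fun j hj => ?_) hcard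
    refine card_le_of_det_smul_add_eq_zero (hs j hj) fun t ht => ?_
    rw [Finset.mem_filter, Matrix.add_mul, Matrix.smul_mul, add_comm, isUnit_iff_isUnit_det,
      isUnit_iff_ne_zero, not_not] at ht
    exact ht.2
  obtain ⟨t, -, ht⟩ := Finset.exists_mem_notMem_of_card_lt_card (t := Finset.univ) hbad
  refine ⟨t, fun j hj => ?_⟩
  by_contra hj'
  exact ht (Finset.mem_biUnion.mpr ⟨j, hj, Finset.mem_filter.mpr ⟨Finset.mem_univ t, hj'⟩⟩)

theorem Matrix.exists_forall_isUnit_mul [Fintype F] {ι m n : Type*} [Fintype ι] [Fintype m]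
    [Fintype n] [DecidableEq n] (M : ι → Matrix m n F)
    (hM : ∀ i, ∃ B : Matrix n m F, B * M i = 1)
    (hcard : Fintype.card ι * Fintype.card n < Fintype.card F) :
    ∃ V : Matrix n m F, ∀ i, IsUnit (V * M i) := by
  classical
  suffices ∀ s : Finset ι, ∃ V : Matrix n m F, ∀ i ∈ s, IsUnit (V * M i) by
    obtain ⟨V, hV⟩ := this Finset.univ
    exact ⟨V, fun i => hV i (Finset.mem_univ i)⟩
  intro s
  induction s using Finset.induction_on with
  | empty => exact ⟨0, fun i hi => absurd hi (Finset.notMem_empty i)⟩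
  | insert i s _ ih =>
    obtain ⟨V, hV⟩ := ih
    obtain ⟨B, hB⟩ := hM i
    have hs : ∀ j ∈ insert i s, IsUnit (B * M j) ∨ IsUnit (V * M j) := by
      intro j hj
      rcases Finset.mem_insert.mp hj with rfl | hj
      · exact Or.inl (hB ▸ isUnit_one)
      · exact Or.inr (hV j hj)
    have hcard' : (insert i s).card * Fintype.card n < Fintype.card F :=
      lt_of_le_of_lt (Nat.mul_le_mul_right _ (Finset.card_le_univ _)) hcard
    obtain ⟨t, ht⟩ := exists_forall_isUnit_add_smul_mul V B M _ hs hcard'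
    exact ⟨V + t • B, ht⟩

end

theorem exists_decoding_matrix_Vdec_general
    (F : Type*) [Field F] [Fintype F]
    (K N l : ℕ)
    (hq : Fintype.card F > K * l)
    (r : Fin K → ℕ)
    (U : (k : Fin K) → Matrix (Fin N) (Fin (r k)) F)
    (hU : ∀ k, (U k).rank = r k)
    (V' : (k : Fin K) → Matrix (Fin (r k)) (Fin l) F)
    (hV' : ∀ k, (V' k).rank = l) :
    ∃ Vdec : Matrix (Fin l) (Fin N) F,
      ∀ k : Fin K, IsUnit (Vdec * U k * V' k) := by
  have hleft : ∀ k, ∃ B : Matrix (Fin l) (Fin N) F, B * (U k * V' k) = 1 := by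
    intro k
    obtain ⟨BU, hBU⟩ := (U k).exists_mul_eq_one_of_rank_eq_card (by simpa using hU k)
    obtain ⟨BV, hBV⟩ := (V' k).exists_mul_eq_one_of_rank_eq_card (by simpa using hV' k)
    refine ⟨BV * BU, ?_⟩
    rw [Matrix.mul_assoc, ← Matrix.mul_assoc BU, hBU, Matrix.one_mul, hBV]
  obtain ⟨Vdec, hVdec⟩ :=
    Matrix.exists_forall_isUnit_mul (fun k => U k * V' k) hleft (by simpa using hq)
  exact ⟨Vdec, fun k => Matrix.mul_assoc Vdec (U k) (V' k) ▸ hVdec k⟩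

/-- **Existence of the decoding matrix V_dec.** Let `F` be a finite field with
`|F| > K·l`, and for each `k` let `U k` be an `N × r k` matrix of full column
rank `r k` and `V' k` an `r k × l` matrix of full column rank `l`. Then there
exists an `l × N` matrix `Vdec` such that `Vdec * U k * V' k` is an invertible
`l × l` matrix for every `k`. -/
theorem exists_decoding_matrix_Vdec
    (F : Type*) [Field F] [Fintype F] [DecidableEq F]
    (K N l : ℕ) (hK : 1 ≤ K) (hN : 1 ≤ N) (hl : 1 ≤ l)
    (hq : Fintype.card F > K * l)
    (r : Fin K → ℕ)
    (U : (k : Fin K) → Matrix (Fin N) (Fin (r k)) F)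
    (hU : ∀ k, (U k).rank = r k)
    (V' : (k : Fin K) → Matrix (Fin (r k)) (Fin l) F)
    (hV' : ∀ k, (V' k).rank = l) :
    ∃ Vdec : Matrix (Fin l) (Fin N) F,
      ∀ k : Fin K, IsUnit (Vdec * U k * V' k) :=
  exists_decoding_matrix_Vdec_general F K N l hq r U hU V' hV'
end

section
/- Closure characterization of the TQC-achievable region: Let S, K, T be natural numbers, and let 𝒲 : Fin K → Finset (Fin (S+1)) and ℰ : Fin T → Finset (Fin (S+1)) be arbitrary set-valued maps. In the space of functions Δ : Fin (S+1) → ℝ, the closure of the set { Δ | ∃ l ∈ ℕ, l ≥ 1, ∃ N : Fin (S+1) → ℕ, (∀ s, Δ(s) = N(s)/l) and for all k ∈ Fin K, t ∈ Fin T: ∑_{s ∈ ℰ(t)} N(s) ≤ ∑_{s ∈ 𝒲(k)} N(s) − l } equals the polyhedron { Δ | (∀ s, Δ(s) ≥ 0) and for all k ∈ Fin K, t ∈ Fin T: ∑_{s ∈ 𝒲(k)} Δ(s) − ∑_{s ∈ ℰ(t)} Δ(s) ≥ 1 }. -/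
/-!
A point `N / l` of the classical region lies in `𝔇_TQC` after dividing its integer constraints
by `l`, and `𝔇_TQC` is a closed polyhedron. Conversely, for `Δ ∈ 𝔇_TQC` round the scaled point
`m Δ` up with `m = l + |ι|`: on a set `W` rounding gains nothing back, on a set `E` it loses at
most `|E| ≤ |ι|`, so the gap `m` between the `W`- and `E`-sums drops to at least `l`. These
rounded points divided by `l` converge to `Δ` as `l → ∞`.
-/

open Filter Topology

section

variable {ι κ τ : Type*}

def classicalRegion (W : κ → Finset ι) (E : τ → Finset ι) : Set (ι → ℝ) :=
  {Δ | ∃ l : ℕ, 1 ≤ l ∧ ∃ N : ι → ℕ, (∀ s, Δ s = (N s : ℝ) / (l : ℝ)) ∧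
    ∀ k t, (∑ s ∈ E t, (N s : ℤ)) ≤ (∑ s ∈ W k, (N s : ℤ)) - (l : ℤ)}

def tqcRegion (W : κ → Finset ι) (E : τ → Finset ι) : Set (ι → ℝ) :=
  {Δ | (∀ s, 0 ≤ Δ s) ∧ ∀ k t, (∑ s ∈ W k, Δ s) - ∑ s ∈ E t, Δ s ≥ 1}

theorem isClosed_tqcRegion (W : κ → Finset ι) (E : τ → Finset ι) :
    IsClosed (tqcRegion W E) := by
  simp only [tqcRegion, Set.ofPred_and, Set.ofPred_forall]
  exact (isClosed_iInter fun s ↦ isClosed_le continuous_const (continuous_apply s)).inter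
    (isClosed_iInter fun k ↦ isClosed_iInter fun t ↦ isClosed_le continuous_const (by fun_prop))

theorem classicalRegion_subset_tqcRegion (W : κ → Finset ι) (E : τ → Finset ι) :
    classicalRegion W E ⊆ tqcRegion W E := by
  rintro Δ ⟨l, hl, N, hΔ, hN⟩
  obtain rfl : Δ = fun s ↦ (N s : ℝ) / l := funext hΔ
  have hl : (0 : ℝ) < l := by exact_mod_cast hl
  refine ⟨fun s ↦ by positivity, fun k t ↦ ?_⟩
  have hgap : (l : ℝ) ≤ ∑ s ∈ W k, (N s : ℝ) - ∑ s ∈ E t, (N s : ℝ) := by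
    have := hN k t
    exact_mod_cast (by linarith : (l : ℤ) ≤ ∑ s ∈ W k, (N s : ℤ) - ∑ s ∈ E t, (N s : ℤ))
  rw [← Finset.sum_div, ← Finset.sum_div, ← sub_div, ge_iff_le, le_div_iff₀ hl]
  linarith

theorem sum_natCeil_le_sum_add_card (F : Finset ι) {x : ι → ℝ} (hx : ∀ i, 0 ≤ x i) :
    ∑ i ∈ F, (⌈x i⌉₊ : ℝ) ≤ ∑ i ∈ F, x i + F.card := by
  calc ∑ i ∈ F, (⌈x i⌉₊ : ℝ) ≤ ∑ i ∈ F, (x i + 1) :=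
        Finset.sum_le_sum fun i _ ↦ (Nat.ceil_lt_add_one (hx i)).le
    _ = ∑ i ∈ F, x i + F.card := by simp [Finset.sum_add_distrib]

theorem sub_card_le_sum_natCeil_mul_sub {W E : Finset ι} {Δ : ι → ℝ} (hΔ : ∀ i, 0 ≤ Δ i)
    (hgap : 1 ≤ ∑ i ∈ W, Δ i - ∑ i ∈ E, Δ i) {m : ℝ} (hm : 0 ≤ m) :
    m - E.card ≤ ∑ i ∈ W, (⌈m * Δ i⌉₊ : ℝ) - ∑ i ∈ E, (⌈m * Δ i⌉₊ : ℝ) := by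
  have hW : m * ∑ i ∈ W, Δ i ≤ ∑ i ∈ W, (⌈m * Δ i⌉₊ : ℝ) := by
    rw [Finset.mul_sum]
    exact Finset.sum_le_sum fun i _ ↦ Nat.le_ceil _
  have hE := sum_natCeil_le_sum_add_card E fun i ↦ mul_nonneg hm (hΔ i)
  rw [← Finset.mul_sum] at hE
  have := mul_le_mul_of_nonneg_left hgap hm
  linarith [mul_sub m (∑ i ∈ W, Δ i) (∑ i ∈ E, Δ i)]

theorem natCeil_div_mem_classicalRegion [Fintype ι] {W : κ → Finset ι} {E : τ → Finset ι}
    {Δ : ι → ℝ} (hΔ : Δ ∈ tqcRegion W E) {l : ℕ} (hl : 1 ≤ l) :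
    (fun s ↦ (⌈(l + Fintype.card ι) * Δ s⌉₊ : ℝ) / l) ∈ classicalRegion W E := by
  refine ⟨l, hl, _, fun s ↦ rfl, fun k t ↦ ?_⟩
  have hgap := sub_card_le_sum_natCeil_mul_sub hΔ.1 (hΔ.2 k t) (m := l + Fintype.card ι)
    (by positivity)
  have hcard : ((E t).card : ℝ) ≤ Fintype.card ι := by exact_mod_cast (E t).card_le_univ
  have hreal : (l : ℝ) ≤ ∑ s ∈ W k, (⌈(l + Fintype.card ι) * Δ s⌉₊ : ℝ) -
      ∑ s ∈ E t, (⌈(l + Fintype.card ι) * Δ s⌉₊ : ℝ) := by linarith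
  have : (l : ℤ) ≤ ∑ s ∈ W k, (⌈(l + Fintype.card ι) * Δ s⌉₊ : ℤ) -
      ∑ s ∈ E t, (⌈(l + Fintype.card ι) * Δ s⌉₊ : ℤ) := by exact_mod_cast hreal
  linarith

theorem tendsto_natCeil_add_mul_div {c x : ℝ} (hc : 0 ≤ c) (hx : 0 ≤ x) :
    Tendsto (fun l : ℕ ↦ (⌈(l + c) * x⌉₊ : ℝ) / l) atTop (𝓝 x) := by
  have hupper : Tendsto (fun l : ℕ ↦ x + (c * x + 1) / l) atTop (𝓝 x) := by
    simpa using tendsto_const_nhds.add (tendsto_const_div_atTop_nhds_zero_nat (c * x + 1))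
  refine tendsto_of_tendsto_of_tendsto_of_le_of_le' tendsto_const_nhds hupper ?_ ?_
  all_goals
    filter_upwards [eventually_ge_atTop 1] with l hl
    have hl : (0 : ℝ) < l := by exact_mod_cast hl
  · rw [le_div_iff₀ hl]
    nlinarith [Nat.le_ceil ((l + c) * x)]
  · have hbound : (x + (c * x + 1) / l) * l = (l + c) * x + 1 := by field_simp; ring
    rw [div_le_iff₀ hl, hbound]
    exact (Nat.ceil_lt_add_one (by positivity)).le

theorem tqcRegion_subset_closure_classicalRegion [Fintype ι] (W : κ → Finset ι)
    (E : τ → Finset ι) : tqcRegion W E ⊆ closure (classicalRegion W E) := by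
  intro Δ hΔ
  refine mem_closure_of_tendsto (tendsto_pi_nhds.2 fun s ↦
    tendsto_natCeil_add_mul_div (Nat.cast_nonneg (Fintype.card ι)) (hΔ.1 s)) ?_
  filter_upwards [eventually_ge_atTop 1] with l hl
  exact natCeil_div_mem_classicalRegion hΔ hl

theorem closure_classicalRegion [Fintype ι] (W : κ → Finset ι) (E : τ → Finset ι) :
    closure (classicalRegion W E) = tqcRegion W E :=
  (closure_minimal (classicalRegion_subset_tqcRegion W E) (isClosed_tqcRegion W E)).antisymm
    (tqcRegion_subset_closure_classicalRegion W E)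

end

/-- **Closure characterization of the TQC-achievable region.** In the space of
cost tuples `Δ : Fin (S+1) → ℝ`, the closure of the set of tuples achieved by
treating qudits as classical dits, i.e. tuples of the form `Δ s = N s / l` with
batch size `l ≥ 1` and integer counts `N` satisfying
`∑_{s ∈ ℰ t} N s ≤ ∑_{s ∈ 𝒲 k} N s − l` for all `k, t`, equals the polyhedron
`𝔇_TQC` of nonnegative tuples satisfying
`∑_{s ∈ 𝒲 k} Δ s − ∑_{s ∈ ℰ t} Δ s ≥ 1` for all `k, t`. -/
theorem closure_TQC_region
    (S K T : ℕ)
    (𝒲 : Fin K → Finset (Fin (S + 1))) (ℰ : Fin T → Finset (Fin (S + 1))) :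
    closure {Δ : Fin (S + 1) → ℝ |
        ∃ l : ℕ, 1 ≤ l ∧ ∃ N : Fin (S + 1) → ℕ,
          (∀ s, Δ s = (N s : ℝ) / (l : ℝ)) ∧
          ∀ (k : Fin K) (t : Fin T),
            (∑ s ∈ ℰ t, (N s : ℤ)) ≤ (∑ s ∈ 𝒲 k, (N s : ℤ)) - (l : ℤ)}
      = {Δ : Fin (S + 1) → ℝ |
          (∀ s, 0 ≤ Δ s) ∧
          ∀ (k : Fin K) (t : Fin T),
            (∑ s ∈ 𝒲 k, Δ s) - ∑ s ∈ ℰ t, Δ s ≥ 1} :=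
  closure_classicalRegion 𝒲 ℰ
end
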